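/- For every natural number M ≥ 1 and every real α ≥ M, it holds that ∑_{i=0}^{M−1} α^i/i! ≤ α^M/(M−1)!. Consequently the derivative Φ'(α) = e^{−α}(∑_{i=0}^{M−1} α^i/i! − α^M/(M−1)!) of Φ(α) := e^{−α}∑_{i=1}^{M} α^i/(i−1)! is ≤ 0 for α ≥ M, so Φ is nonincreasing on [M, ∞). -/

import Mathlib

/-!
Write `Φ(α) = e^{-α} α E_M(α)` with `E_M(α) = ∑_{i<M} α^i/i!` the truncated exponential series.
Since `E_{n+1}' = E_n`, differentiating gives `Φ'(α) = e^{-α} (E_M(α) - α^M/(M-1)!)`.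
The terms `α^i/i!` increase with `i` as long as `i ≤ α`, so for `α ≥ M` each of the `M` terms
of `E_M(α)` is at most `α^{M-1}/(M-1)!`, whence `E_M(α) ≤ M α^{M-1}/(M-1)! ≤ α^M/(M-1)!`.
-/

/-- `Φ(α) = e^{-α} ∑_{x=1}^{M} α^x/(x-1)!`, the expected per-slot throughput of
frame slotted Aloha with multipacket reception capacity `M`. -/
noncomputable def Phi (M : ℕ) (α : ℝ) : ℝ :=
  Real.exp (-α) * ∑ x ∈ Finset.Icc 1 M, α ^ x / (Nat.factorial (x - 1) : ℝ)

open Finset Nat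

noncomputable def expPartialSum (n : ℕ) (x : ℝ) : ℝ := ∑ i ∈ range n, x ^ i / i !

theorem expPartialSum_succ (n : ℕ) (x : ℝ) :
    expPartialSum (n + 1) x = expPartialSum n x + x ^ n / n ! :=
  sum_range_succ _ n

theorem pow_div_factorial_le_pow_div_factorial {α : ℝ} {i n : ℕ} (hin : i ≤ n)
    (hn : (n : ℝ) ≤ α) : α ^ i / i ! ≤ α ^ n / n ! := by
  induction n, hin using Nat.le_induction with
  | base => rfl
  | succ n _ ih =>
    have hα : (n + 1 : ℝ) ≤ α := by exact_mod_cast hn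
    have hα₀ : 0 ≤ α := by linarith
    calc α ^ i / i ! ≤ α ^ n / n ! := ih (by linarith)
      _ ≤ α ^ n / n ! * (α / (n + 1)) := by
          refine le_mul_of_one_le_right (by positivity) ?_
          rwa [one_le_div (by positivity)]
      _ = α ^ (n + 1) / (n + 1)! := by
          rw [factorial_succ]; push_cast; field_simp; ring

theorem expPartialSum_succ_le {n : ℕ} {α : ℝ} (hα : (n + 1 : ℝ) ≤ α) :
    expPartialSum (n + 1) α ≤ α ^ (n + 1) / n ! := by
  have hα₀ : 0 ≤ α := by linarith
  calc expPartialSum (n + 1) α ≤ ∑ _i ∈ range (n + 1), α ^ n / n ! :=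
        sum_le_sum fun i hi ↦ pow_div_factorial_le_pow_div_factorial
          (Nat.lt_succ_iff.mp (mem_range.mp hi)) (by linarith)
    _ = (n + 1) * (α ^ n / n !) := by simp
    _ ≤ α * (α ^ n / n !) := by gcongr
    _ = α ^ (n + 1) / n ! := by ring

theorem hasDerivAt_pow_succ_div_factorial (n : ℕ) (x : ℝ) :
    HasDerivAt (fun y : ℝ ↦ y ^ (n + 1) / (n + 1)!) (x ^ n / n !) x := by
  refine ((hasDerivAt_pow (n + 1) x).div_const ((n + 1)! : ℝ)).congr_deriv ?_
  rw [factorial_succ]; push_cast; field_simp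

theorem hasDerivAt_expPartialSum_succ (n : ℕ) (x : ℝ) :
    HasDerivAt (expPartialSum (n + 1)) (expPartialSum n x) x := by
  induction n with
  | zero =>
    have h1 : expPartialSum 1 = fun _ ↦ 1 := by ext; simp [expPartialSum]
    simpa [h1, expPartialSum] using hasDerivAt_const x (1 : ℝ)
  | succ n ih =>
    rw [funext (expPartialSum_succ (n + 1)), expPartialSum_succ]
    exact ih.add (hasDerivAt_pow_succ_div_factorial n x)

theorem Phi_eq_exp_mul_expPartialSum (M : ℕ) (α : ℝ) :
    Phi M α = Real.exp (-α) * (α * expPartialSum M α) := by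
  rw [Phi, expPartialSum, ← Ico_add_one_right_eq_Icc, sum_Ico_eq_sum_range, Nat.add_sub_cancel]
  congr 1
  rw [mul_sum]
  refine sum_congr rfl fun i _ ↦ ?_
  rw [add_comm 1 i, Nat.add_sub_cancel]
  ring

theorem hasDerivAt_Phi_succ (n : ℕ) (α : ℝ) :
    HasDerivAt (Phi (n + 1))
      (Real.exp (-α) * (expPartialSum (n + 1) α - α ^ (n + 1) / n !)) α := by
  have hexp : HasDerivAt (fun x ↦ Real.exp (-x)) (-Real.exp (-α)) α := by
    simpa using (hasDerivAt_neg α).exp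
  rw [funext (Phi_eq_exp_mul_expPartialSum (n + 1))]
  refine (hexp.fun_mul ((hasDerivAt_id' α).fun_mul
    (hasDerivAt_expPartialSum_succ n α))).congr_deriv ?_
  rw [expPartialSum_succ]
  ring

/-- for `M ≥ 1` and `α ≥ M`, `∑_{i=0}^{M-1} α^i/i! ≤ α^M/(M-1)!`;
consequently the derivative `Φ'(α) = e^{-α}(∑_{i=0}^{M-1} α^i/i! - α^M/(M-1)!)` of `Φ`
is `≤ 0` for `α ≥ M`, so `Φ` is nonincreasing on `[M, ∞)`. -/
theorem phi_antitone_right (M : ℕ) (hM : 1 ≤ M) :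
    (∀ α : ℝ, (M : ℝ) ≤ α →
        ∑ i ∈ Finset.range M, α ^ i / (Nat.factorial i : ℝ)
          ≤ α ^ M / (Nat.factorial (M - 1) : ℝ)) ∧
    (∀ α : ℝ, (M : ℝ) ≤ α →
        HasDerivAt (Phi M)
          (Real.exp (-α) * (∑ i ∈ Finset.range M, α ^ i / (Nat.factorial i : ℝ)
            - α ^ M / (Nat.factorial (M - 1) : ℝ))) α) ∧
    (∀ α : ℝ, (M : ℝ) ≤ α →
        Real.exp (-α) * (∑ i ∈ Finset.range M, α ^ i / (Nat.factorial i : ℝ)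
          - α ^ M / (Nat.factorial (M - 1) : ℝ)) ≤ 0) ∧
    AntitoneOn (Phi M) (Set.Ici (M : ℝ)) := by
  obtain ⟨n, rfl⟩ : ∃ n, M = n + 1 := ⟨M - 1, by omega⟩
  simp only [Nat.add_sub_cancel, ← expPartialSum.eq_1]
  push_cast
  have hderiv_nonpos (α : ℝ) (hα : (n + 1 : ℝ) ≤ α) :
      Real.exp (-α) * (expPartialSum (n + 1) α - α ^ (n + 1) / n !) ≤ 0 :=
    mul_nonpos_of_nonneg_of_nonpos (Real.exp_nonneg _) (sub_nonpos.mpr (expPartialSum_succ_le hα))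
  refine ⟨fun α hα ↦ expPartialSum_succ_le hα, fun α _ ↦ hasDerivAt_Phi_succ n α,
    hderiv_nonpos, ?_⟩
  exact antitoneOn_of_hasDerivWithinAt_nonpos (convex_Ici _)
    (fun α _ ↦ (hasDerivAt_Phi_succ n α).continuousAt.continuousWithinAt)
    (fun α _ ↦ (hasDerivAt_Phi_succ n α).hasDerivWithinAt)
    fun α hα ↦ hderiv_nonpos α (interior_subset hα)
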